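/- Galerkin quasi-optimality with sector constant: Let A be Hermitian positive definite, z with arg z = φ ∈ (-π,π), A_z = zI + A, and W ⊆ V a subspace. Suppose w ∈ V solves A_z w = g, and w_n ∈ w₀ + W satisfies (A_z w_n, φ') = (g, φ') for all φ' ∈ W. Then |‖w_n - w‖| ≤ sec(φ/2) · inf over v ∈ w₀ + W of |‖v - w‖|, where |‖v‖|² = |z|‖v‖² + (Av,v). -/

import Mathlib

/-!
The form `a u v = ⟪u, z • v + A v⟫` is bounded by the energy norm (Cauchy–Schwarz for the
semi-inner product `⟪u, A v⟫`, then in `ℝ²`). It is also coercive up to the factor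
`cos (arg z / 2)`: since `⟪u, A u⟫` is real, `a u u = ‖u‖² z + ⟪u, A u⟫`, and after rotation by
`exp (-i arg z / 2)` both summands make an angle `|arg z| / 2 < π / 2` with the positive real axis.
Galerkin orthogonality turns boundedness and coercivity into Céa's estimate.
-/

open InnerProductSpace

open Complex in
theorem Complex.cos_half_arg_mul_le_norm (z : ℂ) (a r : ℝ) :
    Real.cos (arg z / 2) * (‖z‖ * a + r) ≤ ‖(a : ℂ) * z + r‖ := by
  set θ := arg z / 2
  have hrot : (((a : ℂ) * z + r) * exp ((-θ : ℝ) * I)).re = Real.cos θ * (‖z‖ * a + r) := by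
    have hθ : Real.cos (arg z) * Real.cos θ + Real.sin (arg z) * Real.sin θ = Real.cos θ := by
      rw [← Real.cos_sub]; congr 1; ring
    rw [exp_mul_I, ← ofReal_cos, ← ofReal_sin]
    simp only [mul_re, mul_im, add_re, add_im, ofReal_re, ofReal_im, I_re, I_im, Real.cos_neg,
      Real.sin_neg]
    rw [← norm_mul_cos_arg z, ← norm_mul_sin_arg z]
    linear_combination a * ‖z‖ * hθ
  calc Real.cos θ * (‖z‖ * a + r) = (((a : ℂ) * z + r) * exp ((-θ : ℝ) * I)).re := hrot.symm
    _ ≤ ‖((a : ℂ) * z + r) * exp ((-θ : ℝ) * I)‖ := re_le_norm _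
    _ = ‖(a : ℂ) * z + r‖ := by rw [norm_mul, norm_exp_ofReal_mul_I, mul_one]

section InnerProduct

variable {V : Type*} [NormedAddCommGroup V] [InnerProductSpace ℂ V]

namespace LinearMap

noncomputable abbrev IsPositive.preInnerProductCore {T : V →ₗ[ℂ] V} (hT : T.IsPositive) :
    PreInnerProductSpace.Core ℂ V where
  inner u v := ⟪u, T v⟫_ℂ
  conj_inner_symm u v := by simp only [inner_conj_symm, hT.isSymmetric u v]
  re_inner_nonneg := hT.re_inner_nonneg_right
  add_left _ _ _ := inner_add_left _ _ _
  smul_left _ _ _ := inner_smul_left _ _ _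

theorem IsPositive.norm_inner_le_sqrt_mul_sqrt {T : V →ₗ[ℂ] V} (hT : T.IsPositive) (u v : V) :
    ‖⟪u, T v⟫_ℂ‖ ≤ √((⟪u, T u⟫_ℂ).re) * √((⟪v, T v⟫_ℂ).re) := by
  have hCS : ‖⟪u, T v⟫_ℂ‖ * ‖⟪v, T u⟫_ℂ‖ ≤ (⟪u, T u⟫_ℂ).re * (⟪v, T v⟫_ℂ).re :=
    @InnerProductSpace.Core.inner_mul_inner_self_le ℂ V _ _ _ hT.preInnerProductCore u v
  rw [← hT.isSymmetric v u, norm_inner_symm (T v) u] at hCS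
  rw [← Real.sqrt_mul (by simpa using hT.re_inner_nonneg_right u)]
  exact Real.le_sqrt_of_sq_le (by rw [sq]; exact hCS)

end LinearMap

noncomputable def energyNorm (A : V →ₗ[ℂ] V) (s : ℝ) (v : V) : ℝ :=
  √(s * ‖v‖ ^ 2 + (⟪v, A v⟫_ℂ).re)

section EnergyNorm

variable {A : V →ₗ[ℂ] V}

theorem energyNorm_sq (hA : A.IsPositive) {s : ℝ} (hs : 0 ≤ s) (v : V) :
    energyNorm A s v ^ 2 = s * ‖v‖ ^ 2 + (⟪v, A v⟫_ℂ).re :=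
  Real.sq_sqrt (add_nonneg (by positivity) (by simpa using hA.re_inner_nonneg_right v))

theorem norm_inner_smul_add_le_energyNorm (hA : A.IsPositive) (z : ℂ) (u v : V) :
    ‖⟪u, z • v + A v⟫_ℂ‖ ≤ energyNorm A ‖z‖ u * energyNorm A ‖z‖ v := by
  have hA₀ (x : V) : 0 ≤ (⟪x, A x⟫_ℂ).re := by simpa using hA.re_inner_nonneg_right x
  have hsqrt (x y : V) : ‖z‖ * (‖x‖ * ‖y‖) = √(‖z‖ * ‖x‖ ^ 2) * √(‖z‖ * ‖y‖ ^ 2) := by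
    rw [← Real.sqrt_mul (by positivity), show ‖z‖ * ‖x‖ ^ 2 * (‖z‖ * ‖y‖ ^ 2)
      = (‖z‖ * (‖x‖ * ‖y‖)) ^ 2 by ring, Real.sqrt_sq (by positivity)]
  calc ‖⟪u, z • v + A v⟫_ℂ‖ ≤ ‖z‖ * (‖u‖ * ‖v‖) + ‖⟪u, A v⟫_ℂ‖ := by
        rw [inner_add_right, inner_smul_right]
        refine (norm_add_le _ _).trans ?_
        rw [norm_mul]
        gcongr
        exact norm_inner_le_norm u v
    _ ≤ √(‖z‖ * ‖u‖ ^ 2) * √(‖z‖ * ‖v‖ ^ 2) + √(⟪u, A u⟫_ℂ).re * √(⟪v, A v⟫_ℂ).re := by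
        rw [← hsqrt]
        gcongr
        exact hA.norm_inner_le_sqrt_mul_sqrt u v
    _ ≤ energyNorm A ‖z‖ u * energyNorm A ‖z‖ v := by
        simpa only [energyNorm, Fin.sum_univ_two, Matrix.cons_val_zero, Matrix.cons_val_one] using
          Real.sum_sqrt_mul_sqrt_le Finset.univ
          (f := ![‖z‖ * ‖u‖ ^ 2, (⟪u, A u⟫_ℂ).re]) (g := ![‖z‖ * ‖v‖ ^ 2, (⟪v, A v⟫_ℂ).re])
          (Fin.forall_fin_two.2 ⟨mul_nonneg (norm_nonneg z) (sq_nonneg ‖u‖), hA₀ u⟩)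
          (Fin.forall_fin_two.2 ⟨mul_nonneg (norm_nonneg z) (sq_nonneg ‖v‖), hA₀ v⟩)

theorem cos_half_arg_mul_energyNorm_sq_le (hA : A.IsPositive) (z : ℂ) (u : V) :
    Real.cos (z.arg / 2) * energyNorm A ‖z‖ u ^ 2 ≤ ‖⟪u, z • u + A u⟫_ℂ‖ := by
  have hform : ⟪u, z • u + A u⟫_ℂ = ((‖u‖ ^ 2 : ℝ) : ℂ) * z + ((⟪u, A u⟫_ℂ).re : ℂ) := by
    have hreal : ((⟪u, A u⟫_ℂ).re : ℂ) = ⟪u, A u⟫_ℂ := hA.isSymmetric.coe_re_inner_self_apply u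
    rw [inner_add_right, inner_smul_right, inner_self_eq_norm_sq_to_K, hreal]
    rw [RCLike.ofReal_eq_complex_ofReal, Complex.ofReal_pow]
    ring
  rw [hform, energyNorm_sq hA (norm_nonneg z)]
  exact Complex.cos_half_arg_mul_le_norm z _ _

end EnergyNorm

theorem cea_mul_le {B : V →ₗ[ℂ] V} {N : V → ℝ} {c : ℝ} (hN : ∀ u, 0 ≤ N u)
    (hbound : ∀ u v, ‖⟪u, B v⟫_ℂ‖ ≤ N u * N v) (hcoer : ∀ u, c * N u ^ 2 ≤ ‖⟪u, B u⟫_ℂ‖)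
    {W : Submodule ℂ V} {e d : V} (horth : ∀ φ ∈ W, ⟪φ, B e⟫_ℂ = 0) (hed : e - d ∈ W) :
    c * N e ≤ N d := by
  have hsq : c * N e ^ 2 ≤ N d * N e :=
    calc c * N e ^ 2 ≤ ‖⟪e, B e⟫_ℂ‖ := hcoer e
      _ = ‖⟪e - d, B e⟫_ℂ + ⟪d, B e⟫_ℂ‖ := by rw [← inner_add_left, sub_add_cancel]
      _ = ‖⟪d, B e⟫_ℂ‖ := by rw [horth _ hed, zero_add]
      _ ≤ N d * N e := hbound d e
  rcases (hN e).eq_or_lt with he | he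
  · rw [← he, mul_zero]
    exact hN d
  · nlinarith

end InnerProduct

theorem stmt13_general {V : Type*} [NormedAddCommGroup V] [InnerProductSpace ℂ V]
    (A : V →ₗ[ℂ] V) (hA : A.IsSymmetric)
    (hpos : ∀ v : V, v ≠ 0 → 0 < ((inner ℂ v (A v) : ℂ)).re)
    (z : ℂ) (hz : z.arg ∈ Set.Ioo (-Real.pi) Real.pi)
    (W : Submodule ℂ V) (g w w0 wn : V)
    (hw : z • w + A w = g) (hwn : wn - w0 ∈ W)
    (hgal : ∀ φ ∈ W, (inner ℂ φ (z • wn + A wn) : ℂ) = (inner ℂ φ g : ℂ))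
    (tb : V → ℝ)
    (htb : tb = fun v : V =>
      Real.sqrt (‖z‖ * ‖v‖ ^ 2 + ((inner ℂ v (A v) : ℂ)).re)) :
    ∀ v : V, v - w0 ∈ W →
      tb (wn - w) ≤ (1 / Real.cos (z.arg / 2)) * tb (v - w) := by
  intro v hv
  have hApos : A.IsPositive := by
    refine ⟨hA, fun u => ?_⟩
    rcases eq_or_ne u 0 with rfl | hu
    · simp
    · simpa [hA u u] using (hpos u hu).le
  have hcos : 0 < Real.cos (z.arg / 2) :=
    Real.cos_pos_of_mem_Ioo ⟨by linarith [hz.1], by linarith [hz.2]⟩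
  have horth : ∀ φ ∈ W, ⟪φ, (z • LinearMap.id + A : V →ₗ[ℂ] V) (wn - w)⟫_ℂ = 0 := by
    intro φ hφ
    simp only [map_sub, LinearMap.add_apply, LinearMap.smul_apply, LinearMap.id_apply]
    rw [hw, inner_sub_right, hgal φ hφ, sub_self]
  have hcea : Real.cos (z.arg / 2) * energyNorm A ‖z‖ (wn - w) ≤ energyNorm A ‖z‖ (v - w) :=
    cea_mul_le (fun _ => Real.sqrt_nonneg _) (norm_inner_smul_add_le_energyNorm hApos z)
      (cos_half_arg_mul_energyNorm_sq_le hApos z) horth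
      (by simpa only [sub_sub_sub_cancel_right] using W.sub_mem hwn hv)
  subst htb
  rw [one_div, inv_mul_eq_div, le_div_iff₀ hcos, mul_comm]
  exact hcea

theorem stmt13 {V : Type*} [NormedAddCommGroup V] [InnerProductSpace ℂ V]
    [FiniteDimensional ℂ V]
    (A : V →ₗ[ℂ] V) (hA : A.IsSymmetric)
    (hpos : ∀ v : V, v ≠ 0 → 0 < ((inner ℂ v (A v) : ℂ)).re)
    (z : ℂ) (hz : z.arg ∈ Set.Ioo (-Real.pi) Real.pi) (hz0 : z ≠ 0)
    (W : Submodule ℂ V) (g w w0 wn : V)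
    (hw : z • w + A w = g) (hwn : wn - w0 ∈ W)
    (hgal : ∀ φ ∈ W, (inner ℂ φ (z • wn + A wn) : ℂ) = (inner ℂ φ g : ℂ))
    (tb : V → ℝ)
    (htb : tb = fun v : V =>
      Real.sqrt (‖z‖ * ‖v‖ ^ 2 + ((inner ℂ v (A v) : ℂ)).re)) :
    ∀ v : V, v - w0 ∈ W →
      tb (wn - w) ≤ (1 / Real.cos (z.arg / 2)) * tb (v - w) :=
  stmt13_general A hA hpos z hz W g w w0 wn hw hwn hgal tb htb
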